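/- Let m ≥ 3 and let G ⊂ S^1 be the group of m-th roots of unity. If ψ is a Möbius transformation of the Riemann sphere satisfying ψ(S^1) = S^1 and ψ(G) = G, then there exists ζ ∈ G such that ψ(z) = ζz for all z, or ψ(z) = ζ/z for all z. -/

import Mathlib

/-!
If `ψ(z) = (az + b)/(cz + d)` maps the `m`-th roots of unity into themselves, then
`(az + b)^m - (cz + d)^m` vanishes at all `m` of them; having degree at most `m`, it is a
constant multiple of `z^m - 1`. For `m ≥ 3` the coefficients of `z` and `z^2` therefore vanish,
which gives `a b^(m-1) = c d^(m-1)` and `a^2 b^(m-2) = c^2 d^(m-2)`. Together with `ad ≠ bc`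
these force `b = c = 0` or `a = d = 0`, i.e. `ψ` is `z ↦ ζz` or `z ↦ ζ/z`, and evaluating at
`z = 1` shows `ζ^m = 1`.
-/

open Polynomial

namespace Polynomial

theorem coeff_C_mul_X_add_C_pow {R : Type*} [CommSemiring R] (a b : R) (n k : ℕ) :
    ((C a * X + C b) ^ n).coeff k = n.choose k * a ^ k * b ^ (n - k) := by
  have hterm : ∀ i, (C a * X) ^ i * C b ^ (n - i) * (n.choose i : R[X])
      = C (n.choose i * a ^ i * b ^ (n - i)) * X ^ i := by
    intro i
    simp only [mul_pow, ← C_pow, ← C_eq_natCast, C_mul]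
    ring
  simp only [add_pow, finsetSum_coeff, hterm, coeff_C_mul_X_pow, Finset.sum_ite_eq,
    Finset.mem_range, Order.lt_add_one_iff]
  split_ifs with hk
  · rfl
  · simp [Nat.choose_eq_zero_of_lt (not_le.mp hk)]

variable {R : Type*} [CommRing R] [IsDomain R] {ζ : R} {n : ℕ}

theorem eq_C_mul_X_pow_sub_one_of_eval_eq_zero (hζ : IsPrimitiveRoot ζ n) (hn : 0 < n)
    {p : R[X]} (hp : p.natDegree ≤ n) (hroot : ∀ z : R, z ^ n = 1 → p.eval z = 0) :
    p = C (p.coeff n) * (X ^ n - 1) := by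
  refine eq_of_degree_sub_lt_of_eval_finset_eq (nthRootsFinset n (1 : R)) ?_ fun z hz => ?_
  · rw [hζ.card_nthRootsFinset, degree_lt_iff_coeff_zero]
    intro k hk
    rcases hk.eq_or_lt with rfl | hk
    · simp [coeff_one, hn.ne']
    · simp [coeff_eq_zero_of_natDegree_lt (hp.trans_lt hk), coeff_one, hk.ne', (hn.trans hk).ne']
  · have hz : z ^ n = 1 := (mem_nthRootsFinset hn 1).mp hz
    simp [hroot z hz, hz]

end Polynomial

theorem IsPrimitiveRoot.pow_mul_pow_sub_eq_of_forall_pow_eq {R : Type*} [CommRing R] [IsDomain R]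
    [CharZero R] {ζ : R} {n : ℕ} (hζ : IsPrimitiveRoot ζ n) {a b c d : R}
    (h : ∀ z : R, z ^ n = 1 → (a * z + b) ^ n = (c * z + d) ^ n) {k : ℕ} (hk0 : 0 < k)
    (hkn : k < n) : a ^ k * b ^ (n - k) = c ^ k * d ^ (n - k) := by
  set p : R[X] := (C a * X + C b) ^ n - (C c * X + C d) ^ n
  have hlin (u v : R) : ((C u * X + C v) ^ n).natDegree ≤ n :=
    (natDegree_pow_le_of_le n natDegree_linear_le).trans_eq (mul_one n)
  have hdeg : p.natDegree ≤ n :=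
    (natDegree_sub_le_of_le (hlin a b) (hlin c d)).trans_eq (max_self n)
  have hp := eq_C_mul_X_pow_sub_one_of_eval_eq_zero hζ (hk0.trans hkn) hdeg fun z hz => by
    simp [p, h z hz]
  have hcoeff := congrArg (coeff · k) hp
  simp only [p, coeff_sub, coeff_C_mul_X_add_C_pow, coeff_C_mul, coeff_X_pow, coeff_one,
    hkn.ne, hk0.ne', if_false, sub_zero, mul_zero, ← mul_sub, mul_assoc] at hcoeff
  have hchoose : (n.choose k : R) ≠ 0 := Nat.cast_ne_zero.mpr (Nat.choose_pos hkn.le).ne'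
  exact sub_eq_zero.mp ((mul_eq_zero.mp hcoeff).resolve_left hchoose)

theorem diagonal_or_antidiagonal_of_mul_pow_eq {R : Type*} [CommRing R] [IsDomain R]
    {a b c d : R} {n : ℕ} (hdet : a * d - b * c ≠ 0)
    (h₁ : a * b ^ (n + 1) = c * d ^ (n + 1)) (h₂ : a ^ 2 * b ^ n = c ^ 2 * d ^ n) :
    (b = 0 ∧ c = 0) ∨ (a = 0 ∧ d = 0) := by
  by_cases hb : b = 0
  · subst hb
    have hd : d ≠ 0 := by rintro rfl; simp at hdet
    simp_all
  by_cases ha : a = 0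
  · subst ha
    have hc : c ≠ 0 := by rintro rfl; simp at hdet
    simp_all
  exfalso
  -- squaring `h₁` and comparing with `h₂` gives `b ^ (n + 2) = d ^ (n + 2)`
  have hpow : b ^ (n + 2) = d ^ (n + 2) := by
    refine mul_left_cancel₀ (mul_ne_zero (pow_ne_zero 2 ha) (pow_ne_zero n hb)) ?_
    linear_combination (a * b ^ (n + 1) + c * d ^ (n + 1)) * h₁ - d ^ (n + 2) * h₂
  refine hdet (mul_left_cancel₀ (pow_ne_zero (n + 1) hb) ?_)
  linear_combination d * h₁ - c * hpow

open OnePoint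

theorem stmt_15_general (m : ℕ) (hm : 3 ≤ m) (ψ : OnePoint ℂ → OnePoint ℂ)
    (a b c d : ℂ) (hdet : a * d - b * c ≠ 0)
    (hψ1 : ∀ w : ℂ, c * w + d ≠ 0 →
      ψ (w : OnePoint ℂ) = (((a * w + b) / (c * w + d) : ℂ) : OnePoint ℂ))
    (hψ2 : ∀ w : ℂ, c * w + d = 0 → ψ (w : OnePoint ℂ) = ∞)
    (hψ3 : c = 0 → ψ ∞ = ∞)
    (hψ4 : c ≠ 0 → ψ ∞ = ((a / c : ℂ) : OnePoint ℂ))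
    (hG : ψ '' ((fun z : ℂ => (z : OnePoint ℂ)) '' {z : ℂ | z ^ m = 1})
       = (fun z : ℂ => (z : OnePoint ℂ)) '' {z : ℂ | z ^ m = 1}) :
    ∃ ζ : ℂ, ζ ^ m = 1 ∧
      (((∀ w : ℂ, ψ (w : OnePoint ℂ) = ((ζ * w : ℂ) : OnePoint ℂ)) ∧ ψ ∞ = ∞) ∨
       ((∀ w : ℂ, w ≠ 0 → ψ (w : OnePoint ℂ) = ((ζ / w : ℂ) : OnePoint ℂ)) ∧
         ψ ((0 : ℂ) : OnePoint ℂ) = ∞ ∧ ψ ∞ = ((0 : ℂ) : OnePoint ℂ))) := by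
  have hroot : ∀ z : ℂ, z ^ m = 1 → (a * z + b) ^ m = (c * z + d) ^ m := by
    intro z hz
    obtain ⟨u, hu : u ^ m = 1, hψz⟩ :
        ψ z ∈ (fun z : ℂ => (z : OnePoint ℂ)) '' {z : ℂ | z ^ m = 1} :=
      hG ▸ Set.mem_image_of_mem ψ (Set.mem_image_of_mem _ hz)
    have hcd : c * z + d ≠ 0 := fun h => coe_ne_infty u (hψz.trans (hψ2 z h))
    rw [hψ1 z hcd, coe_eq_coe] at hψz
    rwa [hψz, div_pow, div_eq_one_iff_eq (pow_ne_zero m hcd)] at hu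
  have hpow_div : ∀ {x y : ℂ}, x ^ m = y ^ m → y ≠ 0 → (x / y) ^ m = 1 := fun hxy hy => by
    rw [div_pow, hxy, div_self (pow_ne_zero m hy)]
  obtain ⟨n, rfl⟩ : ∃ n, m = n + 2 := ⟨m - 2, by omega⟩
  have hprim := Complex.isPrimitiveRoot_exp (n + 2) (by omega)
  rcases diagonal_or_antidiagonal_of_mul_pow_eq hdet
    (by simpa using hprim.pow_mul_pow_sub_eq_of_forall_pow_eq hroot one_pos (by omega))
    (by simpa using hprim.pow_mul_pow_sub_eq_of_forall_pow_eq hroot two_pos (by omega))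
    with ⟨rfl, rfl⟩ | ⟨rfl, rfl⟩
  · have hd : d ≠ 0 := by rintro rfl; simp at hdet
    refine ⟨a / d, hpow_div (by simpa using hroot 1 (one_pow _)) hd,
      Or.inl ⟨fun w => ?_, hψ3 rfl⟩⟩
    rw [hψ1 w (by simpa using hd), zero_mul, zero_add, add_zero, div_mul_eq_mul_div]
  · have hc : c ≠ 0 := by rintro rfl; simp at hdet
    refine ⟨b / c, hpow_div (by simpa using hroot 1 (one_pow _)) hc,
      Or.inr ⟨fun w hw => ?_, hψ2 0 (by simp), by simp [hψ4 hc]⟩⟩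
    rw [hψ1 w (by simpa using mul_ne_zero hc hw), zero_mul, zero_add, add_zero, div_div]

/-- a Möbius transformation of the Riemann sphere preserving the
unit circle and the group `G` of `m`-th roots of unity (`m ≥ 3`) is either a
rotation `z ↦ ζz` or a reflection `z ↦ ζ/z` with `ζ ∈ G`. -/
theorem stmt_15 (m : ℕ) (hm : 3 ≤ m) (ψ : OnePoint ℂ → OnePoint ℂ)
    (a b c d : ℂ) (hdet : a * d - b * c ≠ 0)
    (hψ1 : ∀ w : ℂ, c * w + d ≠ 0 →
      ψ (w : OnePoint ℂ) = (((a * w + b) / (c * w + d) : ℂ) : OnePoint ℂ))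
    (hψ2 : ∀ w : ℂ, c * w + d = 0 → ψ (w : OnePoint ℂ) = ∞)
    (hψ3 : c = 0 → ψ ∞ = ∞)
    (hψ4 : c ≠ 0 → ψ ∞ = ((a / c : ℂ) : OnePoint ℂ))
    (hS : ψ '' ((fun z : ℂ => (z : OnePoint ℂ)) '' {z : ℂ | ‖z‖ = 1})
       = (fun z : ℂ => (z : OnePoint ℂ)) '' {z : ℂ | ‖z‖ = 1})
    (hG : ψ '' ((fun z : ℂ => (z : OnePoint ℂ)) '' {z : ℂ | z ^ m = 1})
       = (fun z : ℂ => (z : OnePoint ℂ)) '' {z : ℂ | z ^ m = 1}) :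
    ∃ ζ : ℂ, ζ ^ m = 1 ∧
      (((∀ w : ℂ, ψ (w : OnePoint ℂ) = ((ζ * w : ℂ) : OnePoint ℂ)) ∧ ψ ∞ = ∞) ∨
       ((∀ w : ℂ, w ≠ 0 → ψ (w : OnePoint ℂ) = ((ζ / w : ℂ) : OnePoint ℂ)) ∧
         ψ ((0 : ℂ) : OnePoint ℂ) = ∞ ∧ ψ ∞ = ((0 : ℂ) : OnePoint ℂ))) :=
  stmt_15_general m hm ψ a b c d hdet hψ1 hψ2 hψ3 hψ4 hG
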